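/- arXiv:1707.02181 — 5 statements merged into one kernel-verified Lean document; each statement's English description precedes it below -/
import Mathlib

section
/- Let u, v ∈ ℂ^m and let h : ℂ^m → ℂ^m be a linear map with operator norm ‖h‖ ≤ |⟨u,v⟩|²/(9‖u‖‖v‖). Then the spectral radius of uv* + h is at least |⟨u,v⟩|/2, where uv* denotes the rank-one map w ↦ ⟨w,v⟩u. -/
/-!
Write `A = uv* + h`, `c = |⟨u,v⟩|` and `ε = ‖h‖`, so that `9 ε ‖u‖ ‖v‖ ≤ c²`. The cone of
vectors `x` with `3 ε ‖v‖ ‖x‖ ≤ c |⟨x,v⟩|` contains `u`, is mapped into itself by `A`, and on it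
`|⟨Ax,v⟩| ≥ (2c/3) |⟨x,v⟩|`. Hence `‖Aⁿ‖ ≥ c (2c/3)ⁿ / (‖u‖ ‖v‖)`, and Gelfand's formula gives
`ρ(A) ≥ 2c/3 ≥ c/2`.
-/

open Filter Topology ContinuousLinearMap
open scoped InnerProductSpace

theorem spectrum.ofReal_le_spectralRadius_of_mul_pow_le_norm_pow {A : Type*} [NormedRing A]
    [NormedAlgebra ℂ A] [CompleteSpace A] {a : A} {C r : ℝ} (hC : 0 < C) (hr : 0 ≤ r)
    (h : ∀ n : ℕ, C * r ^ n ≤ ‖a ^ n‖) : ENNReal.ofReal r ≤ spectralRadius ℂ a := by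
  have hroot : Tendsto (fun n : ℕ => C ^ (1 / n : ℝ) * r) atTop (𝓝 r) := by
    simpa using ((Real.continuousAt_const_rpow hC.ne').tendsto.comp
      tendsto_one_div_atTop_nhds_zero_nat).mul_const r
  refine le_of_tendsto_of_tendsto (ENNReal.tendsto_ofReal hroot)
    (spectrum.pow_norm_pow_one_div_tendsto_nhds_spectralRadius a) ?_
  filter_upwards [eventually_ne_atTop 0] with n hn
  gcongr
  calc C ^ (1 / n : ℝ) * r = (C * r ^ n) ^ (1 / n : ℝ) := by
        rw [Real.mul_rpow hC.le (by positivity), one_div, Real.pow_rpow_inv_natCast hr hn]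
    _ ≤ ‖a ^ n‖ ^ (1 / n : ℝ) := by gcongr; exact h n

section

variable {𝕜 E : Type*} [RCLike 𝕜] [NormedAddCommGroup E] [InnerProductSpace 𝕜 E]
  {u v x : E} {h : E →L[𝕜] E}

theorem toSpanSingleton_comp_innerSL_add_apply :
    ((toSpanSingleton 𝕜 u).comp (innerSL 𝕜 v) + h) x = ⟪v, x⟫_𝕜 • u + h x :=
  rfl

theorem norm_inner_toSpanSingleton_comp_innerSL_add_apply_ge
    (hx : 3 * (‖h‖ * ‖v‖ * ‖x‖) ≤ ‖⟪v, u⟫_𝕜‖ * ‖⟪v, x⟫_𝕜‖) :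
    2 * ‖⟪v, u⟫_𝕜‖ / 3 * ‖⟪v, x⟫_𝕜‖ ≤
      ‖⟪v, ((toSpanSingleton 𝕜 u).comp (innerSL 𝕜 v) + h) x⟫_𝕜‖ := by
  have hhx : ‖⟪v, h x⟫_𝕜‖ ≤ ‖h‖ * ‖v‖ * ‖x‖ := by
    calc ‖⟪v, h x⟫_𝕜‖ ≤ ‖v‖ * ‖h x‖ := norm_inner_le_norm _ _
      _ ≤ ‖v‖ * (‖h‖ * ‖x‖) := by gcongr; exact h.le_opNorm x
      _ = ‖h‖ * ‖v‖ * ‖x‖ := by ring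
  have hsplit : ‖⟪v, x⟫_𝕜‖ * ‖⟪v, u⟫_𝕜‖ ≤
      ‖⟪v, ((toSpanSingleton 𝕜 u).comp (innerSL 𝕜 v) + h) x⟫_𝕜‖ + ‖⟪v, h x⟫_𝕜‖ := by
    rw [toSpanSingleton_comp_innerSL_add_apply, inner_add_right, inner_smul_right, ← norm_mul]
    exact norm_le_add_norm_add _ _
  linarith

theorem norm_toSpanSingleton_comp_innerSL_add_apply_le
    (hsmall : 9 * (‖h‖ * ‖u‖ * ‖v‖) ≤ ‖⟪v, u⟫_𝕜‖ ^ 2)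
    (hx : 3 * (‖h‖ * ‖v‖ * ‖x‖) ≤ ‖⟪v, u⟫_𝕜‖ * ‖⟪v, x⟫_𝕜‖) :
    3 * (‖h‖ * ‖v‖ * ‖((toSpanSingleton 𝕜 u).comp (innerSL 𝕜 v) + h) x‖) ≤
      ‖⟪v, u⟫_𝕜‖ * ‖⟪v, ((toSpanSingleton 𝕜 u).comp (innerSL 𝕜 v) + h) x⟫_𝕜‖ := by
  set c := ‖⟪v, u⟫_𝕜‖
  have hAx : ‖((toSpanSingleton 𝕜 u).comp (innerSL 𝕜 v) + h) x‖ ≤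
      ‖⟪v, x⟫_𝕜‖ * ‖u‖ + ‖h‖ * ‖x‖ := by
    rw [toSpanSingleton_comp_innerSL_add_apply, ← norm_smul]
    exact (norm_add_le _ _).trans (by gcongr; exact h.le_opNorm x)
  -- Cauchy–Schwarz turns `hsmall` into `‖h‖ ≤ c / 9`.
  have hhc : 9 * (‖h‖ * c) ≤ c ^ 2 := by
    have : c ≤ ‖v‖ * ‖u‖ := norm_inner_le_norm v u
    nlinarith [norm_nonneg h]
  have hgrowth := norm_inner_toSpanSingleton_comp_innerSL_add_apply_ge hx
  have hc : 0 ≤ c := norm_nonneg _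
  have hφ : 0 ≤ ‖⟪v, x⟫_𝕜‖ := norm_nonneg _
  calc 3 * (‖h‖ * ‖v‖ * ‖((toSpanSingleton 𝕜 u).comp (innerSL 𝕜 v) + h) x‖)
      ≤ 3 * (‖h‖ * ‖v‖ * (‖⟪v, x⟫_𝕜‖ * ‖u‖ + ‖h‖ * ‖x‖)) := by gcongr
    _ = 3 * (‖h‖ * ‖u‖ * ‖v‖) * ‖⟪v, x⟫_𝕜‖ + ‖h‖ * (3 * (‖h‖ * ‖v‖ * ‖x‖)) := by ring
    _ ≤ c ^ 2 / 3 * ‖⟪v, x⟫_𝕜‖ + ‖h‖ * (c * ‖⟪v, x⟫_𝕜‖) := by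
        gcongr
        linarith
    _ ≤ 2 * c / 3 * (2 * c / 3 * ‖⟪v, x⟫_𝕜‖) := by nlinarith
    _ ≤ c * ‖⟪v, ((toSpanSingleton 𝕜 u).comp (innerSL 𝕜 v) + h) x⟫_𝕜‖ := by
        nlinarith

theorem norm_inner_toSpanSingleton_comp_innerSL_add_pow_apply_ge
    (hsmall : 9 * (‖h‖ * ‖u‖ * ‖v‖) ≤ ‖⟪v, u⟫_𝕜‖ ^ 2) (n : ℕ) :
    ‖⟪v, u⟫_𝕜‖ * (2 * ‖⟪v, u⟫_𝕜‖ / 3) ^ n ≤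
      ‖⟪v, (((toSpanSingleton 𝕜 u).comp (innerSL 𝕜 v) + h) ^ n) u⟫_𝕜‖ := by
  set A := (toSpanSingleton 𝕜 u).comp (innerSL 𝕜 v) + h
  set c := ‖⟪v, u⟫_𝕜‖
  suffices ∀ n : ℕ, c * (2 * c / 3) ^ n ≤ ‖⟪v, (A ^ n) u⟫_𝕜‖ ∧
      3 * (‖h‖ * ‖v‖ * ‖(A ^ n) u‖) ≤ c * ‖⟪v, (A ^ n) u⟫_𝕜‖ from (this n).1
  intro n
  induction n with
  | zero =>
    simp only [pow_zero, one_apply_eq_self, mul_one]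
    refine ⟨le_rfl, ?_⟩
    have : 0 ≤ ‖h‖ * ‖u‖ * ‖v‖ := by positivity
    nlinarith
  | succ n ih =>
    have hc : 0 ≤ c := norm_nonneg _
    rw [pow_succ' A, mul_apply_eq_comp]
    refine ⟨?_, norm_toSpanSingleton_comp_innerSL_add_apply_le hsmall ih.2⟩
    calc c * (2 * c / 3) ^ (n + 1) = 2 * c / 3 * (c * (2 * c / 3) ^ n) := by ring
      _ ≤ 2 * c / 3 * ‖⟪v, (A ^ n) u⟫_𝕜‖ := by gcongr; exact ih.1
      _ ≤ ‖⟪v, A ((A ^ n) u)⟫_𝕜‖ := norm_inner_toSpanSingleton_comp_innerSL_add_apply_ge ih.2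

theorem mul_pow_le_norm_toSpanSingleton_comp_innerSL_add_pow
    (hsmall : 9 * (‖h‖ * ‖u‖ * ‖v‖) ≤ ‖⟪v, u⟫_𝕜‖ ^ 2) (n : ℕ) :
    ‖⟪v, u⟫_𝕜‖ * (2 * ‖⟪v, u⟫_𝕜‖ / 3) ^ n ≤
      ‖u‖ * ‖v‖ * ‖((toSpanSingleton 𝕜 u).comp (innerSL 𝕜 v) + h) ^ n‖ :=
  calc _ ≤ ‖⟪v, (((toSpanSingleton 𝕜 u).comp (innerSL 𝕜 v) + h) ^ n) u⟫_𝕜‖ :=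
        norm_inner_toSpanSingleton_comp_innerSL_add_pow_apply_ge hsmall n
    _ ≤ ‖v‖ * ‖(((toSpanSingleton 𝕜 u).comp (innerSL 𝕜 v) + h) ^ n) u‖ := norm_inner_le_norm _ _
    _ ≤ ‖v‖ * (‖((toSpanSingleton 𝕜 u).comp (innerSL 𝕜 v) + h) ^ n‖ * ‖u‖) := by
        gcongr; exact le_opNorm _ _
    _ = _ := by ring

end

theorem stmt0_general {m : ℕ} (u v : EuclideanSpace ℂ (Fin m))
    (h : EuclideanSpace ℂ (Fin m) →L[ℂ] EuclideanSpace ℂ (Fin m))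
    (hnorm : ‖h‖ ≤ ‖(inner ℂ v u : ℂ)‖ ^ 2 / (9 * ‖u‖ * ‖v‖)) :
    ENNReal.ofReal (‖(inner ℂ v u : ℂ)‖ / 2) ≤
      spectralRadius ℂ ((toSpanSingleton ℂ u).comp (innerSL ℂ v) + h) := by
  set c := ‖(inner ℂ v u : ℂ)‖
  rcases (norm_nonneg _ : 0 ≤ c).eq_or_lt with hc | hc
  · simp [show c = 0 from hc.symm]
  have huv : 0 < ‖u‖ * ‖v‖ :=
    hc.trans_le (by simpa [mul_comm] using norm_inner_le_norm (𝕜 := ℂ) v u)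
  have hsmall : 9 * (‖h‖ * ‖u‖ * ‖v‖) ≤ c ^ 2 := by
    rw [le_div_iff₀ (by linarith)] at hnorm
    linarith
  have hpow : ∀ n : ℕ, c / (‖u‖ * ‖v‖) * (2 * c / 3) ^ n ≤
      ‖((toSpanSingleton ℂ u).comp (innerSL ℂ v) + h) ^ n‖ := fun n => by
    rw [div_mul_eq_mul_div, div_le_iff₀ huv, mul_comm _ (‖u‖ * ‖v‖)]
    exact mul_pow_le_norm_toSpanSingleton_comp_innerSL_add_pow hsmall n
  calc ENNReal.ofReal (c / 2) ≤ ENNReal.ofReal (2 * c / 3) :=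
        ENNReal.ofReal_le_ofReal (by linarith)
    _ ≤ _ := spectrum.ofReal_le_spectralRadius_of_mul_pow_le_norm_pow (by positivity)
        (by positivity) hpow

open ContinuousLinearMap in
/-- Lemma in linear algebra: if `h` is small compared to `|(u,v)|²/(9‖u‖‖v‖)`,
then the spectral radius of `uv* + h` is at least `|(u,v)|/2`. -/
theorem stmt0 {m : ℕ} (u v : EuclideanSpace ℂ (Fin m))
    (hu : u ≠ 0) (hv : v ≠ 0)
    (h : EuclideanSpace ℂ (Fin m) →L[ℂ] EuclideanSpace ℂ (Fin m))
    (hnorm : ‖h‖ ≤ ‖(inner ℂ v u : ℂ)‖ ^ 2 / (9 * ‖u‖ * ‖v‖)) :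
    ENNReal.ofReal (‖(inner ℂ v u : ℂ)‖ / 2) ≤
      spectralRadius ℂ ((toSpanSingleton ℂ u).comp (innerSL ℂ v) + h) :=
  stmt0_general u v h hnorm
end

section
/- Let Φ be a real 2×2 matrix admitting a singular value decomposition Φ = U · diag(s, 1/s) · V with U, V ∈ SO(2) and s ≥ 3. If |⟨V U e₁, e₁⟩| ≥ 3/s, then the spectral radius of Φ is at least (s/2)·|⟨V U e₁, e₁⟩|. -/
/-- If `Φ = U diag(s, 1/s) V` with `U, V ∈ SO(2)`, `s ≥ 3`, and
`|⟨VUe₁,e₁⟩| ≥ 3/s`, then the spectral radius of `Φ` is at least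
`(s/2)·|⟨VUe₁,e₁⟩|`. -/
theorem stmt3 (U V : Matrix (Fin 2) (Fin 2) ℝ)
    (hU : U.transpose * U = 1) (hUdet : U.det = 1)
    (hV : V.transpose * V = 1) (hVdet : V.det = 1)
    (s : ℝ) (hs : 3 ≤ s)
    (Φ : Matrix (Fin 2) (Fin 2) ℝ)
    (hΦ : Φ = U * Matrix.diagonal ![s, s⁻¹] * V)
    (hentry : 3 / s ≤ |(V * U) 0 0|) :
    ∃ μ ∈ spectrum ℂ (Φ.map (Complex.ofReal)),
      s / 2 * |(V * U) 0 0| ≤ ‖μ‖ := by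
  have hs0 : (0:ℝ) < s := by linarith
  have htr' : Φ 0 0 + Φ 1 1 = s * (V * U) 0 0 + s⁻¹ * (V * U) 1 1 := by
    subst hΦ
    simp [Matrix.mul_apply, Fin.sum_univ_two, Matrix.diagonal]
    ring
  have hdetΦ : Φ 0 0 * Φ 1 1 - Φ 0 1 * Φ 1 0 = 1 := by
    have hd : Φ.det = 1 := by
      rw [hΦ, Matrix.det_mul, Matrix.det_mul, hUdet, hVdet]
      simp [Matrix.det_diagonal, Fin.prod_univ_two]
      field_simp
    rw [Matrix.det_fin_two] at hd
    linarith
  set W := V * U with hWdef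
  set a := W 0 0 with ha
  have hW : W.transpose * W = 1 := by
    rw [hWdef, Matrix.transpose_mul]
    calc U.transpose * V.transpose * (V * U)
        = U.transpose * ((V.transpose * V) * U) := by simp only [mul_assoc]
      _ = 1 := by rw [hV, one_mul, hU]
  have hWdet : W.det = 1 := by
    rw [hWdef, Matrix.det_mul, hUdet, hVdet]; ring
  have h00 : W 0 0 * W 0 0 + W 1 0 * W 1 0 = 1 := by
    have h := congrFun (congrFun hW 0) 0
    simpa [Matrix.mul_apply, Fin.sum_univ_two, Matrix.transpose_apply,
      Matrix.one_apply] using h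
  have h01 : W 0 0 * W 0 1 + W 1 0 * W 1 1 = 0 := by
    have h := congrFun (congrFun hW 0) 1
    simpa [Matrix.mul_apply, Fin.sum_univ_two, Matrix.transpose_apply,
      Matrix.one_apply] using h
  have hdetW : W 0 0 * W 1 1 - W 0 1 * W 1 0 = 1 := by
    have h := hWdet
    rw [Matrix.det_fin_two] at h
    linarith
  have hda : W 1 1 = W 0 0 := by
    linear_combination W 0 0 * hdetW + W 1 0 * h01 - W 1 1 * h00
  set t : ℝ := a * (s + s⁻¹) with ht
  have htr : Φ 0 0 + Φ 1 1 = t := by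
    rw [htr', hda, ht, ha]; ring
  have hsum : 0 < s + s⁻¹ := by positivity
  have htabs : |t| = |a| * (s + s⁻¹) := by
    rw [ht, abs_mul, abs_of_pos hsum]
  have ht3 : 3 ≤ |t| := by
    rw [htabs]
    have h1 : 3 / s * s ≤ |a| * (s + s⁻¹) :=
      mul_le_mul hentry (by linarith [inv_nonneg.mpr hs0.le]) hs0.le (abs_nonneg a)
    rw [div_mul_cancel₀ _ (ne_of_gt hs0)] at h1
    exact h1
  have hdisc : 0 ≤ t ^ 2 - 4 := by nlinarith [sq_abs t]
  set r : ℝ := Real.sqrt (t ^ 2 - 4) with hr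
  have hr0 : 0 ≤ r := Real.sqrt_nonneg _
  have hr2 : r ^ 2 = t ^ 2 - 4 := Real.sq_sqrt hdisc
  set σ : ℝ := if 0 ≤ t then 1 else -1 with hσ
  have hσ2 : σ ^ 2 = 1 := by rw [hσ]; split <;> ring
  set μr : ℝ := (t + σ * r) / 2 with hμr
  have hroot : μr ^ 2 - t * μr + 1 = 0 := by
    have he : μr ^ 2 - t * μr + 1 = (σ ^ 2 * r ^ 2 - (t ^ 2 - 4)) / 4 := by
      rw [hμr]; ring
    rw [he, hσ2, hr2]; ring
  have hμabs : |μr| = (|t| + r) / 2 := by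
    rw [hμr, hσ]
    split
    · rename_i h
      rw [abs_of_nonneg (by positivity), abs_of_nonneg h]; ring
    · rename_i h
      push_neg at h
      rw [abs_of_nonpos (by nlinarith), abs_of_neg h]; ring
  refine ⟨((μr : ℂ)), ?_, ?_⟩
  · rw [spectrum.mem_iff]
    intro hunit
    rw [Matrix.isUnit_iff_isUnit_det, Matrix.det_fin_two] at hunit
    simp only [Matrix.sub_apply, Matrix.algebraMap_matrix_apply, Matrix.map_apply,
      if_pos rfl, if_true, Algebra.algebraMap_self, RingHom.id_apply] at hunit
    rw [if_neg (by decide : ¬(0:Fin 2) = 1), if_neg (by decide : ¬(1:Fin 2) = 0)] at hunit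
    have key : ((μr:ℂ) - (Φ 0 0 : ℂ)) * ((μr:ℂ) - (Φ 1 1 : ℂ))
        - (0 - (Φ 0 1 :ℂ)) * (0 - (Φ 1 0 : ℂ))
        = ((μr ^ 2 - (Φ 0 0 + Φ 1 1) * μr + (Φ 0 0 * Φ 1 1 - Φ 0 1 * Φ 1 0) : ℝ) : ℂ) := by
      push_cast; ring
    exact hunit.ne_zero (by rw [key, htr, hdetΦ, hroot]; norm_num)
  · have hnorm : ‖((μr : ℂ))‖ = |μr| := by
      rw [Complex.norm_real, Real.norm_eq_abs]
    rw [hnorm, hμabs, htabs]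
    have h2 : 0 ≤ |a| * s⁻¹ := by positivity
    have hid : |a| * (s + s⁻¹) / 2 = s / 2 * |a| + |a| * s⁻¹ / 2 := by ring
    linarith
end

section
/- Let Φ_N, Φ_{N−1} ∈ SL₂(ℝ) with Φ_N = T Φ_{N−1} for some T ∈ SL₂(ℝ). Write the singular value decompositions Φ_N = U_N diag(s_N, s_N^{-1}) V_N and Φ_{N−1} = U_{N−1} diag(s_{N−1}, s_{N−1}^{-1}) V_{N−1} with s_N, s_{N−1} ≥ 1 and U's, V's in SO(2). Let θ be the angle defined by V_N* e₂ = cos θ · V_{N−1}* e₂ + sin θ · V_{N−1}* e₁. Then |sin θ| ≤ ‖T‖ / (‖Φ_N‖ · ‖Φ_{N−1}‖). -/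
/-!
Let `v = V_N* e₂`. By the singular value decompositions, `‖Φ_N v‖ = s_N⁻¹`, while the first
coordinate of `V_{N-1} v` is `sin θ`, so `‖Φ_{N-1} v‖ ≥ s_{N-1} |sin θ|`. Since `T ∈ SL₂(ℝ)`, its
inverse is its adjugate, which is `Tᵀ` conjugated by a rotation and so has norm `‖T‖`; hence
`‖Φ_{N-1} v‖ = ‖T⁻¹ Φ_N v‖ ≤ ‖T‖ s_N⁻¹`. Finally `‖Φ_N‖ = s_N` and `‖Φ_{N-1}‖ = s_{N-1}`.
-/

open scoped Matrix.Norms.L2Operator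
open Matrix

namespace Matrix

variable {n : Type*} [Fintype n] [DecidableEq n]

lemma mem_unitaryGroup_of_transpose_mul_self {U : Matrix n n ℝ} (hU : Uᵀ * U = 1) :
    U ∈ unitaryGroup n ℝ := by
  rwa [mem_unitaryGroup_iff', star_eq_conjTranspose, conjTranspose_eq_transpose_of_trivial]

lemma norm_toEuclideanCLM_apply_of_transpose_mul_self {U : Matrix n n ℝ} (hU : Uᵀ * U = 1)
    (x : EuclideanSpace ℝ n) : ‖toEuclideanCLM (𝕜 := ℝ) U x‖ = ‖x‖ :=
  ContinuousLinearMap.norm_map_of_mem_unitary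
    (Unitary.map_mem _ (mem_unitaryGroup_of_transpose_mul_self hU)) x

lemma l2_opNorm_mul_mul_of_transpose_mul_self {U V : Matrix n n ℝ} (hU : Uᵀ * U = 1)
    (hV : Vᵀ * V = 1) (A : Matrix n n ℝ) : ‖U * A * V‖ = ‖A‖ := by
  rw [CStarRing.norm_mul_mem_unitary _ (mem_unitaryGroup_of_transpose_mul_self hV),
    CStarRing.norm_mem_unitary_mul _ (mem_unitaryGroup_of_transpose_mul_self hU)]

lemma toEuclideanCLM_mul_apply (A B : Matrix n n ℝ) (x : EuclideanSpace ℝ n) :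
    toEuclideanCLM (𝕜 := ℝ) (A * B) x =
      toEuclideanCLM (𝕜 := ℝ) A (toEuclideanCLM (𝕜 := ℝ) B x) := by
  rw [map_mul]; rfl

lemma toEuclideanCLM_diagonal_single (d : n → ℝ) (i : n) (c : ℝ) :
    toEuclideanCLM (𝕜 := ℝ) (diagonal d) (EuclideanSpace.single i c) =
      d i • EuclideanSpace.single i c := by
  ext j
  by_cases h : j = i <;> simp [h, mulVec_diagonal]

lemma norm_toEuclideanCLM_svd_apply_transpose_single {U V : Matrix n n ℝ} (hU : Uᵀ * U = 1)
    (hV : Vᵀ * V = 1) (d : n → ℝ) (i : n) :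
    ‖toEuclideanCLM (𝕜 := ℝ) (U * diagonal d * V)
      (toEuclideanCLM (𝕜 := ℝ) Vᵀ (EuclideanSpace.single i 1))‖ = |d i| := by
  rw [← toEuclideanCLM_mul_apply, mul_assoc, mul_eq_one_comm.mp hV, mul_one,
    toEuclideanCLM_mul_apply, norm_toEuclideanCLM_apply_of_transpose_mul_self hU,
    toEuclideanCLM_diagonal_single, norm_smul, PiLp.norm_single, norm_one, mul_one,
    Real.norm_eq_abs]

lemma abs_mul_abs_apply_le_norm_toEuclideanCLM_svd_apply {U : Matrix n n ℝ} (hU : Uᵀ * U = 1)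
    (V : Matrix n n ℝ) (d : n → ℝ) (x : EuclideanSpace ℝ n) (i : n) :
    |d i| * |toEuclideanCLM (𝕜 := ℝ) V x i| ≤
      ‖toEuclideanCLM (𝕜 := ℝ) (U * diagonal d * V) x‖ := by
  rw [mul_assoc, toEuclideanCLM_mul_apply, norm_toEuclideanCLM_apply_of_transpose_mul_self hU,
    toEuclideanCLM_mul_apply, ← abs_mul]
  convert PiLp.norm_apply_le
    (toEuclideanCLM (𝕜 := ℝ) (diagonal d) (toEuclideanCLM (𝕜 := ℝ) V x)) i
  simp [mulVec_diagonal]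

end Matrix

lemma Matrix.l2_opNorm_svd_fin_two {U V : Matrix (Fin 2) (Fin 2) ℝ} (hU : Uᵀ * U = 1)
    (hV : Vᵀ * V = 1) {s : ℝ} (hs : 1 ≤ s) : ‖U * diagonal ![s, s⁻¹] * V‖ = s := by
  have hs₀ : 0 < s := by linarith
  rw [l2_opNorm_mul_mul_of_transpose_mul_self hU hV, l2_opNorm_diagonal]
  apply le_antisymm
  · refine (pi_norm_le_iff_of_nonneg hs₀.le).mpr fun i => ?_
    fin_cases i
    · simp [abs_of_pos hs₀]
    · simp [abs_of_pos hs₀, inv_le_one_of_one_le₀ hs |>.trans hs]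
  · simpa [abs_of_pos hs₀] using norm_le_pi_norm (![s, s⁻¹]) 0

lemma Matrix.adjugate_fin_two_eq_mul_transpose_mul (A : Matrix (Fin 2) (Fin 2) ℝ) :
    adjugate A = !![0, -1; 1, 0] * Aᵀ * !![0, -1; 1, 0]ᵀ := by
  rw [adjugate_fin_two]
  ext i j; fin_cases i <;> fin_cases j <;> simp [Matrix.mul_apply, vecMul, dotProduct,
    Fin.sum_univ_two]

lemma Matrix.l2_opNorm_adjugate_fin_two (A : Matrix (Fin 2) (Fin 2) ℝ) : ‖adjugate A‖ = ‖A‖ := by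
  have hJ : (!![0, -1; 1, 0] : Matrix (Fin 2) (Fin 2) ℝ)ᵀ * !![0, -1; 1, 0] = 1 := by
    ext i j; fin_cases i <;> fin_cases j <;> simp [Matrix.mul_apply, Fin.sum_univ_two]
  rw [adjugate_fin_two_eq_mul_transpose_mul, l2_opNorm_mul_mul_of_transpose_mul_self hJ
    (by rw [transpose_transpose, mul_eq_one_comm.mp hJ]), ← conjTranspose_eq_transpose_of_trivial,
    l2_opNorm_conjTranspose]

lemma Matrix.norm_le_l2_opNorm_mul_norm_toEuclideanCLM_apply {A : Matrix (Fin 2) (Fin 2) ℝ}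
    (hA : A.det = 1) (x : EuclideanSpace ℝ (Fin 2)) :
    ‖x‖ ≤ ‖A‖ * ‖toEuclideanCLM (𝕜 := ℝ) A x‖ := by
  have hx : toEuclideanCLM (𝕜 := ℝ) (adjugate A) (toEuclideanCLM (𝕜 := ℝ) A x) = x := by
    rw [← toEuclideanCLM_mul_apply, adjugate_mul, hA, one_smul, map_one]; rfl
  calc ‖x‖ = ‖toEuclideanCLM (𝕜 := ℝ) (adjugate A) (toEuclideanCLM (𝕜 := ℝ) A x)‖ := by rw [hx]
    _ ≤ ‖adjugate A‖ * ‖toEuclideanCLM (𝕜 := ℝ) A x‖ :=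
      (toEuclideanCLM (𝕜 := ℝ) (adjugate A)).le_opNorm _
    _ = ‖A‖ * ‖toEuclideanCLM (𝕜 := ℝ) A x‖ := by rw [l2_opNorm_adjugate_fin_two]

theorem stmt8_general (T ΦN ΦN' UN VN UN' VN' : Matrix (Fin 2) (Fin 2) ℝ)
    (hdetT : T.det = 1)
    (hprod : ΦN = T * ΦN')
    (hUN : UN.transpose * UN = 1)
    (hVN : VN.transpose * VN = 1)
    (hUN' : UN'.transpose * UN' = 1)
    (hVN' : VN'.transpose * VN' = 1)
    (sN sN' : ℝ) (hsN : 1 ≤ sN) (hsN' : 1 ≤ sN')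
    (hsvdN : ΦN = UN * Matrix.diagonal ![sN, sN⁻¹] * VN)
    (hsvdN' : ΦN' = UN' * Matrix.diagonal ![sN', sN'⁻¹] * VN')
    (θ : ℝ)
    (hθ : Matrix.toEuclideanCLM (𝕜 := ℝ) VN.transpose (EuclideanSpace.single 1 1) =
      Real.cos θ • Matrix.toEuclideanCLM (𝕜 := ℝ) VN'.transpose (EuclideanSpace.single 1 1) +
      Real.sin θ • Matrix.toEuclideanCLM (𝕜 := ℝ) VN'.transpose (EuclideanSpace.single 0 1)) :
    |Real.sin θ| ≤ ‖Matrix.toEuclideanCLM (𝕜 := ℝ) T‖ /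
      (‖Matrix.toEuclideanCLM (𝕜 := ℝ) ΦN‖ * ‖Matrix.toEuclideanCLM (𝕜 := ℝ) ΦN'‖) := by
  simp only [← cstar_norm_def]
  set v := toEuclideanCLM (𝕜 := ℝ) VNᵀ (EuclideanSpace.single 1 1)
  have hΦNv : ‖toEuclideanCLM (𝕜 := ℝ) ΦN v‖ = sN⁻¹ := by
    rw [hsvdN, norm_toEuclideanCLM_svd_apply_transpose_single hUN hVN]
    simp [abs_of_pos (zero_lt_one.trans_le hsN)]
  have hsin : toEuclideanCLM (𝕜 := ℝ) VN' v 0 = Real.sin θ := by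
    simp only [v, hθ, map_add, map_smul, ← toEuclideanCLM_mul_apply, mul_eq_one_comm.mp hVN',
      map_one]
    simp
  have hΦN'v : sN' * |Real.sin θ| ≤ ‖toEuclideanCLM (𝕜 := ℝ) ΦN' v‖ := by
    have h := abs_mul_abs_apply_le_norm_toEuclideanCLM_svd_apply hUN' VN' ![sN', sN'⁻¹] v 0
    rwa [← hsvdN', hsin, Matrix.cons_val_zero, abs_of_pos (zero_lt_one.trans_le hsN')] at h
  have hT : ‖toEuclideanCLM (𝕜 := ℝ) ΦN' v‖ ≤ ‖T‖ * sN⁻¹ := by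
    rw [← hΦNv, hprod, toEuclideanCLM_mul_apply]
    exact norm_le_l2_opNorm_mul_norm_toEuclideanCLM_apply hdetT _
  rw [hsvdN, hsvdN', l2_opNorm_svd_fin_two hUN hVN hsN, l2_opNorm_svd_fin_two hUN' hVN' hsN',
    le_div_iff₀ (by positivity)]
  calc |Real.sin θ| * (sN * sN') = sN * (sN' * |Real.sin θ|) := by ring
    _ ≤ sN * (‖T‖ * sN⁻¹) := by gcongr sN * ?_; exact hΦN'v.trans hT
    _ = ‖T‖ := by field_simp

/-- If `Φ_N = T Φ_{N−1}` in `SL₂(ℝ)`, with singular value decompositions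
`Φ_N = U_N diag(s_N, 1/s_N) V_N`, `Φ_{N−1} = U' diag(s', 1/s') V'` and `θ` defined
by `V_N* e₂ = cos θ · V'* e₂ + sin θ · V'* e₁`, then
`|sin θ| ≤ ‖T‖ / (‖Φ_N‖ ‖Φ_{N−1}‖)`. -/
theorem stmt8 (T ΦN ΦN' UN VN UN' VN' : Matrix (Fin 2) (Fin 2) ℝ)
    (hdetT : T.det = 1) (hdetN : ΦN.det = 1) (hdetN' : ΦN'.det = 1)
    (hprod : ΦN = T * ΦN')
    (hUN : UN.transpose * UN = 1) (hUNdet : UN.det = 1)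
    (hVN : VN.transpose * VN = 1) (hVNdet : VN.det = 1)
    (hUN' : UN'.transpose * UN' = 1) (hUN'det : UN'.det = 1)
    (hVN' : VN'.transpose * VN' = 1) (hVN'det : VN'.det = 1)
    (sN sN' : ℝ) (hsN : 1 ≤ sN) (hsN' : 1 ≤ sN')
    (hsvdN : ΦN = UN * Matrix.diagonal ![sN, sN⁻¹] * VN)
    (hsvdN' : ΦN' = UN' * Matrix.diagonal ![sN', sN'⁻¹] * VN')
    (θ : ℝ)
    (hθ : Matrix.toEuclideanCLM (𝕜 := ℝ) VN.transpose (EuclideanSpace.single 1 1) =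
      Real.cos θ • Matrix.toEuclideanCLM (𝕜 := ℝ) VN'.transpose (EuclideanSpace.single 1 1) +
      Real.sin θ • Matrix.toEuclideanCLM (𝕜 := ℝ) VN'.transpose (EuclideanSpace.single 0 1)) :
    |Real.sin θ| ≤ ‖Matrix.toEuclideanCLM (𝕜 := ℝ) T‖ /
      (‖Matrix.toEuclideanCLM (𝕜 := ℝ) ΦN‖ * ‖Matrix.toEuclideanCLM (𝕜 := ℝ) ΦN'‖) :=
  stmt8_general T ΦN ΦN' UN VN UN' VN' hdetT hprod hUN hVN hUN' hVN' sN sN' hsN hsN' hsvdN hsvdN' θ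
    hθ
end

section
/- Let Φ ∈ SL₂(ℝ) with operator norm ‖Φ‖ = s ≥ 1, and suppose its spectral radius satisfies ρ(Φ) ≤ δ s for some δ ∈ [0,1]. Writing Φ = U diag(s, 1/s) V with U, V ∈ SO(2), if s ≥ 3 and |⟨VUe₁, e₁⟩| ≥ 3/s, then |⟨VUe₁, e₁⟩| ≤ 2δ. -/
/-- membership in matrix spectrum via determinant of `μ • 1 - M`. -/
lemma mem_spectrum_of_det (M : Matrix (Fin 2) (Fin 2) ℂ) (μ : ℂ)
    (h : (μ • (1 : Matrix (Fin 2) (Fin 2) ℂ) - M).det = 0) :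
    μ ∈ spectrum ℂ M := by
  rw [spectrum.mem_iff]
  intro hu
  rw [Algebra.algebraMap_eq_smul_one] at hu
  rw [Matrix.isUnit_iff_isUnit_det, h] at hu
  exact hu.ne_zero rfl

/-- Contrapositive of the spectral radius corollary: if `Φ = U diag(s,1/s) V ∈ SL₂(ℝ)`
with `‖Φ‖ = s ≥ 3`, `|⟨VUe₁,e₁⟩| ≥ 3/s` and `ρ(Φ) ≤ δ s` for some `δ ∈ [0,1]`, then
`|⟨VUe₁,e₁⟩| ≤ 2δ`. -/
theorem stmt13 (Φ U V : Matrix (Fin 2) (Fin 2) ℝ) (hdet : Φ.det = 1)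
    (hU : U.transpose * U = 1) (hUdet : U.det = 1)
    (hV : V.transpose * V = 1) (hVdet : V.det = 1)
    (s : ℝ) (hs3 : 3 ≤ s)
    (hsvd : Φ = U * Matrix.diagonal ![s, s⁻¹] * V)
    (hnorm : ‖Matrix.toEuclideanCLM (𝕜 := ℝ) Φ‖ = s)
    (δ : ℝ) (hδ0 : 0 ≤ δ) (hδ1 : δ ≤ 1)
    (hρ : ∀ μ ∈ spectrum ℂ (Φ.map (Complex.ofReal)), ‖μ‖ ≤ δ * s)
    (hentry : 3 / s ≤ |(V * U) 0 0|) :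
    |(V * U) 0 0| ≤ 2 * δ := by
  have hs0 : (0:ℝ) < s := by linarith
  set A := V * U with hA
  -- A is in SO(2)
  have hAorth : A.transpose * A = 1 := by
    have : A.transpose = U.transpose * V.transpose := by
      rw [hA, Matrix.transpose_mul]
    rw [this, hA]
    calc U.transpose * V.transpose * (V * U)
        = U.transpose * (V.transpose * V) * U := by
          simp only [Matrix.mul_assoc]
      _ = 1 := by rw [hV]; simp [← Matrix.mul_assoc, hU]
  have hAdet : A.det = 1 := by rw [hA, Matrix.det_mul, hVdet, hUdet, one_mul]
  -- A 1 1 = A 0 0 (rotation matrix)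
  have hAentry : A 1 1 = A 0 0 := by
    have h1 : A⁻¹ = A.transpose := by
      exact Matrix.inv_eq_left_inv hAorth
    have h2 : A⁻¹ = A.adjugate := by
      rw [Matrix.inv_def, hAdet]; simp
    have h3 : A.transpose = A.adjugate := by rw [← h1, h2]
    have := congrFun (congrFun h3 0) 0
    exact (by simpa [Matrix.adjugate_fin_two, Matrix.transpose_apply] using this : A 0 0 = A 1 1).symm
  -- trace of Φ
  have htr : Φ.trace = A 0 0 * (s + s⁻¹) := by
    rw [hsvd, Matrix.trace_mul_cycle]
    rw [Matrix.trace_fin_two]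
    simp [Matrix.mul_apply, Matrix.diagonal, Fin.sum_univ_two, ← hA, hAentry]
    ring
  -- complex eigenvalues
  set M := Φ.map (Complex.ofReal) with hM
  have hMdet : M.det = 1 := by
    rw [Matrix.det_fin_two] at hdet ⊢
    simp only [hM, Matrix.map_apply]
    norm_cast
  have hMtr : M.trace = (Φ.trace : ℂ) := by
    rw [hM, Matrix.trace_fin_two, Matrix.trace_fin_two]
    simp
  -- get a root of the characteristic polynomial
  have hcp : ∀ μ : ℂ, (μ • (1 : Matrix (Fin 2) (Fin 2) ℂ) - M).det
      = μ ^ 2 - M.trace * μ + M.det := by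
    intro μ
    rw [Matrix.det_fin_two, Matrix.det_fin_two, Matrix.trace_fin_two]
    simp [Matrix.one_apply]
    ring
  obtain ⟨μ, hμ⟩ : ∃ μ : ℂ, μ ^ 2 - M.trace * μ + M.det = 0 := by
    have hdeg : (Polynomial.C (1:ℂ) * Polynomial.X ^ 2 + Polynomial.C (-M.trace) * Polynomial.X
        + Polynomial.C M.det).degree = 2 := Polynomial.degree_quadratic one_ne_zero
    rcases Complex.exists_root (by rw [hdeg]; norm_num) with ⟨z, hz⟩
    refine ⟨z, ?_⟩
    simp only [Polynomial.IsRoot, Polynomial.eval_add, Polynomial.eval_mul, Polynomial.eval_pow,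
      Polynomial.eval_C, Polynomial.eval_X] at hz
    linear_combination hz
  have hμ' : μ ∈ spectrum ℂ M := by
    apply mem_spectrum_of_det
    rw [hcp]; exact hμ
  have hν' : (M.trace - μ) ∈ spectrum ℂ M := by
    apply mem_spectrum_of_det
    rw [hcp]; ring_nf; ring_nf at hμ; linear_combination hμ
  have h1 := hρ μ hμ'
  have h2 := hρ (M.trace - μ) hν'
  have htrb : ‖M.trace‖ ≤ 2 * (δ * s) := by
    calc ‖M.trace‖ = ‖μ + (M.trace - μ)‖ := by ring_nf
      _ ≤ ‖μ‖ + ‖M.trace - μ‖ := norm_add_le _ _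
      _ ≤ δ * s + δ * s := add_le_add h1 h2
      _ = 2 * (δ * s) := by ring
  have htrr : |Φ.trace| ≤ 2 * (δ * s) := by
    rwa [hMtr, Complex.norm_real, Real.norm_eq_abs] at htrb
  rw [htr, abs_mul] at htrr
  have hsinv : 0 < s⁻¹ := inv_pos.mpr hs0
  have hsp : s < s + s⁻¹ := by linarith
  have habs : |s + s⁻¹| = s + s⁻¹ := abs_of_pos (by positivity)
  rw [habs] at htrr
  have : |A 0 0| * s ≤ 2 * (δ * s) := by
    nlinarith [abs_nonneg (A 0 0), inv_pos.mpr hs0]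
  nlinarith [this]
end

section
/- Let N ≥ 1, let H_N(g) be the N×N matrix with diagonal entries v_1, ..., v_N, superdiagonal entries e^{-g}, subdiagonal entries e^{g}, corner entries (H_N)_{1,N} = e^{g} and (H_N)_{N,1} = e^{-g}, and all other entries zero. Let Φ_N(z) = T_N(z)⋯T_1(z) with T_j(z) = [[z − v_j, −1],[1, 0]]. Then z ∈ ℂ is an eigenvalue of H_N(g) if and only if e^{Ng} is an eigenvalue of Φ_N(z). -/
/-!
The gauge transformation `φ_k = e^{-kg} ψ_k` turns the eigenvalue equation `H_N(g) ψ = z ψ` into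
the untwisted recurrence `φ_{k+1} = (z - v_k) φ_k - φ_{k-1}` together with the Floquet condition
`φ_{k+N} = e^{-Ng} φ_k`. The transfer matrices propagate `(φ_{k+1}, φ_k)`, so eigenvectors of
`H_N(g)` for `z` correspond to eigenvectors of `Φ_N(z)` for `e^{-Ng}`. As `det Φ_N(z) = 1`, the
eigenvalues of `Φ_N(z)` are closed under inversion, which turns `e^{-Ng}` into `e^{Ng}`.
-/

/-- The Hatano–Nelson (non-Hermitian Anderson) matrix `H_N(g)` on a ring:
diagonal `v`, superdiagonal `e^{-g}`, subdiagonal `e^{g}`, corner entries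
`(1,N) ↦ e^{g}` and `(N,1) ↦ e^{-g}`. -/
noncomputable def hatanoNelson (N : ℕ) (g : ℝ) (v : Fin N → ℝ) :
    Matrix (Fin N) (Fin N) ℂ :=
  Matrix.of fun i j =>
    if i = j then (v i : ℂ)
    else if (j : ℕ) = (i : ℕ) + 1 then (Real.exp (-g) : ℂ)
    else if (i : ℕ) = (j : ℕ) + 1 then (Real.exp g : ℂ)
    else if (i : ℕ) = 0 ∧ (j : ℕ) = N - 1 then (Real.exp g : ℂ)
    else if (i : ℕ) = N - 1 ∧ (j : ℕ) = 0 then (Real.exp (-g) : ℂ)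
    else 0

open Matrix Polynomial Fin.NatCast Fin.CommRing

theorem Matrix.mem_spectrum_iff_exists_mulVec_eq_smul {n K : Type*} [Fintype n] [DecidableEq n]
    [Field K] (A : Matrix n n K) (μ : K) :
    μ ∈ spectrum K A ↔ ∃ x, x ≠ 0 ∧ A *ᵥ x = μ • x := by
  rw [spectrum.mem_iff, isUnit_iff_isUnit_det, isUnit_iff_ne_zero, not_not,
    ← exists_mulVec_eq_zero_iff]
  simp only [sub_mulVec, algebraMap_eq_diagonal, Pi.algebraMap_def, Algebra.algebraMap_self,
    RingHom.id_apply, ← smul_one_eq_diagonal, smul_mulVec, one_mulVec, sub_eq_zero, eq_comm]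

theorem Matrix.inv_mem_spectrum_iff_of_det_eq_one {K : Type*} [Field K]
    {A : Matrix (Fin 2) (Fin 2) K} (hA : A.det = 1) {μ : K} (hμ : μ ≠ 0) :
    μ⁻¹ ∈ spectrum K A ↔ μ ∈ spectrum K A := by
  simp only [mem_spectrum_iff_isRoot_charpoly, charpoly_fin_two, hA, IsRoot, eval_add, eval_sub,
    eval_pow, eval_X, eval_mul, eval_C]
  have key : μ⁻¹ ^ 2 - A.trace * μ⁻¹ + 1 = μ⁻¹ ^ 2 * (μ ^ 2 - A.trace * μ + 1) := by
    field_simp; ring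
  rw [key, mul_eq_zero, or_iff_right (pow_ne_zero 2 (inv_ne_zero hμ))]

section Transfer

variable {R : Type*} [CommRing R]

def transferMatrix (z c : R) : Matrix (Fin 2) (Fin 2) R := !![z - c, -1; 1, 0]

def transferProduct (z : R) (V : ℕ → R) (n : ℕ) : Matrix (Fin 2) (Fin 2) R :=
  (List.ofFn fun j : Fin n => transferMatrix z (V j)).reverse.prod

def transferSeq (z : R) (V : ℕ → R) (a b : R) : ℕ → R
  | 0 => b
  | 1 => a
  | k + 2 => (z - V k) * transferSeq z V a b (k + 1) - transferSeq z V a b k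

variable (z : R) (V : ℕ → R)

theorem transferSeq_add_two (a b : R) (k : ℕ) :
    transferSeq z V a b (k + 2) =
      (z - V k) * transferSeq z V a b (k + 1) - transferSeq z V a b k :=
  rfl

@[simp]
theorem transferProduct_zero : transferProduct z V 0 = 1 := rfl

theorem transferProduct_succ (n : ℕ) :
    transferProduct z V (n + 1) = transferMatrix z (V n) * transferProduct z V n := by
  simp only [transferProduct, List.ofFn_succ', List.concat_eq_append, List.reverse_append,
    List.reverse_singleton, List.singleton_append, List.prod_cons, Fin.val_castSucc, Fin.val_last]

theorem det_transferProduct (n : ℕ) : (transferProduct z V n).det = 1 := by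
  induction n with
  | zero => simp
  | succ n ih =>
    rw [transferProduct_succ, det_mul, ih, transferMatrix, det_fin_two_of]
    ring

theorem transferMatrix_mulVec (c a b : R) :
    transferMatrix z c *ᵥ ![a, b] = ![(z - c) * a - b, a] := by
  ext i
  fin_cases i <;> simp [transferMatrix, mulVec, dotProduct, Fin.sum_univ_two, sub_eq_add_neg]

theorem transferProduct_mulVec_of_recurrence {φ : ℕ → R} {n : ℕ}
    (hφ : ∀ k < n, φ (k + 2) = (z - V k) * φ (k + 1) - φ k) :
    transferProduct z V n *ᵥ ![φ 1, φ 0] = ![φ (n + 1), φ n] := by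
  induction n with
  | zero => simp
  | succ n ih =>
    rw [transferProduct_succ, ← Matrix.mulVec_mulVec, ih fun k hk => hφ k (by omega),
      transferMatrix_mulVec, hφ n (by omega)]

end Transfer

theorem Complex.ofReal_exp_mul_ofReal_exp_neg (g : ℝ) :
    (Real.exp g : ℂ) * Real.exp (-g) = 1 := by
  rw [← ofReal_mul, ← Real.exp_add, add_neg_cancel, Real.exp_zero, ofReal_one]

section HatanoNelson

variable {N : ℕ} [NeZero N] (g : ℝ) (v : Fin N → ℝ)

theorem hatanoNelson_apply (hN : 3 ≤ N) (i j : Fin N) :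
    hatanoNelson N g v i j =
      (if j = i then (v i : ℂ) else 0) + (if j = i + 1 then (Real.exp (-g) : ℂ) else 0) +
        (if j = i - 1 then (Real.exp g : ℂ) else 0) := by
  obtain ⟨n, rfl⟩ : ∃ n, N = n + 1 := ⟨N - 1, by omega⟩
  have hi := i.isLt
  have hj := j.isLt
  simp only [hatanoNelson, of_apply, Fin.ext_iff, Fin.val_add_one, Fin.coe_sub_one, Fin.val_last,
    Fin.val_zero]
  split_ifs <;> first | omega | simp

theorem hatanoNelson_mulVec_apply (hN : 3 ≤ N) (ψ : Fin N → ℂ) (i : Fin N) :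
    (hatanoNelson N g v *ᵥ ψ) i =
      Real.exp g * ψ (i - 1) + v i * ψ i + Real.exp (-g) * ψ (i + 1) := by
  simp only [mulVec, dotProduct, hatanoNelson_apply g v hN, add_mul, ite_mul, zero_mul,
    Finset.sum_add_distrib, Finset.sum_ite_eq', Finset.mem_univ, if_true]
  ring

/-- `gaugeSeq g ψ k` is `e^{-kg} ψ_k` in the paper's numbering of sites by `1, …, N`. -/
noncomputable def gaugeSeq (ψ : Fin N → ℂ) (k : ℕ) : ℂ :=
  (Real.exp (-g) : ℂ) ^ k * ψ ((k : Fin N) - 1)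

theorem gaugeSeq_add_period (ψ : Fin N → ℂ) (k : ℕ) :
    gaugeSeq g ψ (k + N) = (Real.exp (-g) : ℂ) ^ N * gaugeSeq g ψ k := by
  simp only [gaugeSeq, Nat.cast_add, Fin.natCast_self, add_zero, pow_add]
  ring

theorem hatanoNelson_mulVec_eq_smul_iff (hN : 3 ≤ N) (ψ : Fin N → ℂ) (z : ℂ) :
    hatanoNelson N g v *ᵥ ψ = z • ψ ↔
      ∀ k < N,
        gaugeSeq g ψ (k + 2) = (z - v (k : Fin N)) * gaugeSeq g ψ (k + 1) - gaugeSeq g ψ k := by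
  have hexp := Complex.ofReal_exp_mul_ofReal_exp_neg g
  have hne : (Real.exp (-g) : ℂ) ≠ 0 := Complex.ofReal_ne_zero.mpr (Real.exp_ne_zero _)
  rw [funext_iff, Fin.forall_iff]
  refine forall₂_congr fun k hk => ?_
  set i : Fin N := ⟨k, hk⟩
  have hik : ((k : ℕ) : Fin N) = i := Fin.cast_val_eq_self i
  simp only [hatanoNelson_mulVec_apply g v hN, Pi.smul_apply, smul_eq_mul, gaugeSeq, Nat.cast_add,
    Nat.cast_ofNat, Nat.cast_one, hik]
  have h1 : i + 2 - 1 = i + 1 := by ring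
  have h2 : i + 1 - 1 = i := by ring
  rw [h1, h2, ← mul_right_inj' (pow_ne_zero (k + 1) hne)]
  constructor <;> intro h
  · linear_combination h - (Real.exp (-g) : ℂ) ^ k * ψ (i - 1) * hexp
  · linear_combination h + (Real.exp (-g) : ℂ) ^ k * ψ (i - 1) * hexp

omit [NeZero N] in
variable (N) in
noncomputable def ofGaugeSeq (φ : ℕ → ℂ) (i : Fin N) : ℂ :=
  (Real.exp g : ℂ) ^ ((i : ℕ) + 1) * φ ((i : ℕ) + 1)

theorem gaugeSeq_ofGaugeSeq {φ : ℕ → ℂ} (h0 : φ N = (Real.exp (-g) : ℂ) ^ N * φ 0)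
    (h1 : φ (N + 1) = (Real.exp (-g) : ℂ) ^ N * φ 1) {k : ℕ} (hk : k ≤ N + 1) :
    gaugeSeq g (ofGaugeSeq N g φ) k = φ k := by
  have hexp := Complex.ofReal_exp_mul_ofReal_exp_neg g
  have hpow (n : ℕ) : (Real.exp g : ℂ) ^ n * (Real.exp (-g) : ℂ) ^ n = 1 := by
    rw [← mul_pow, hexp, one_pow]
  have hval : ∀ m < N,
      ofGaugeSeq N g φ (m : Fin N) = (Real.exp g : ℂ) ^ (m + 1) * φ (m + 1) :=
    fun m hm => by rw [ofGaugeSeq, Fin.val_cast_of_lt hm]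
  obtain rfl | ⟨m, rfl, hm⟩ | rfl : k = 0 ∨ (∃ m, k = m + 1 ∧ m < N) ∨ k = N + 1 := by
    rcases k with _ | m
    · exact Or.inl rfl
    · rcases Nat.lt_or_ge m N with hm | hm
      · exact Or.inr (Or.inl ⟨m, rfl, hm⟩)
      · exact Or.inr (Or.inr (by omega))
  · have hidx : ((0 : ℕ) : Fin N) - 1 = ((N - 1 : ℕ) : Fin N) := by
      rw [Nat.cast_sub NeZero.one_le, Fin.natCast_self]; simp
    rw [gaugeSeq, hidx, hval _ (by omega), Nat.sub_add_cancel NeZero.one_le, h0]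
    linear_combination φ 0 * hpow N
  · rw [gaugeSeq, Nat.cast_succ, add_sub_cancel_right, hval m hm]
    linear_combination φ (m + 1) * hpow (m + 1)
  · rw [gaugeSeq, Nat.cast_succ, Fin.natCast_self, zero_add, sub_self, ← Nat.cast_zero,
      hval 0 (Nat.pos_of_neZero N), h1]
    linear_combination (Real.exp (-g) : ℂ) ^ N * φ 1 * hexp

theorem exists_transferProduct_eigenvector_of_hatanoNelson (hN : 3 ≤ N) {z : ℂ}
    {ψ : Fin N → ℂ} (hψ0 : ψ ≠ 0) (hψ : hatanoNelson N g v *ᵥ ψ = z • ψ) :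
    ∃ w, w ≠ 0 ∧
      transferProduct z (fun k => (v k : ℂ)) N *ᵥ w = (Real.exp (-g) : ℂ) ^ N • w := by
  have hrec := (hatanoNelson_mulVec_eq_smul_iff g v hN ψ z).1 hψ
  refine ⟨![gaugeSeq g ψ 1, gaugeSeq g ψ 0], fun hw0 => hψ0 (funext fun i => ?_), ?_⟩
  · have h := congrFun (transferProduct_mulVec_of_recurrence z _ (n := i)
      fun k hk => hrec k (by omega)) 0
    rw [hw0] at h
    simpa [gaugeSeq, eq_comm (a := (0 : ℂ))] using h
  · have h1 := gaugeSeq_add_period g ψ 1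
    have h0 := gaugeSeq_add_period g ψ 0
    rw [zero_add] at h0
    rw [transferProduct_mulVec_of_recurrence z _ hrec, add_comm, h1, h0]
    simp

theorem exists_hatanoNelson_eigenvector_of_transferProduct (hN : 3 ≤ N) {z : ℂ}
    {w : Fin 2 → ℂ} (hw0 : w ≠ 0)
    (hw : transferProduct z (fun k => (v k : ℂ)) N *ᵥ w = (Real.exp (-g) : ℂ) ^ N • w) :
    ∃ ψ, ψ ≠ 0 ∧ hatanoNelson N g v *ᵥ ψ = z • ψ := by
  set φ := transferSeq z (fun k => (v k : ℂ)) (w 0) (w 1)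
  have hw' : w = ![φ 1, φ 0] := by ext i; fin_cases i <;> rfl
  have hΦ := transferProduct_mulVec_of_recurrence z _ (n := N) (φ := φ)
    fun k _ => transferSeq_add_two z _ _ _ k
  rw [← hw', hw, hw'] at hΦ
  have h0 : φ N = (Real.exp (-g) : ℂ) ^ N * φ 0 := by simpa using (congrFun hΦ 1).symm
  have h1 : φ (N + 1) = (Real.exp (-g) : ℂ) ^ N * φ 1 := by simpa using (congrFun hΦ 0).symm
  have hgauge {k : ℕ} (hk : k ≤ N + 1) := gaugeSeq_ofGaugeSeq g h0 h1 hk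
  refine ⟨ofGaugeSeq N g φ, fun hψ0 => hw0 ?_, ?_⟩
  · rw [hw', ← hgauge (by omega), ← hgauge (by omega), hψ0]
    simp [gaugeSeq]
  · rw [hatanoNelson_mulVec_eq_smul_iff g v hN]
    intro k hk
    rw [hgauge (by omega), hgauge (by omega), hgauge (by omega)]
    exact transferSeq_add_two z _ _ _ k

theorem mem_spectrum_hatanoNelson_iff (hN : 3 ≤ N) (z : ℂ) :
    z ∈ spectrum ℂ (hatanoNelson N g v) ↔
      (Real.exp (-g) : ℂ) ^ N ∈ spectrum ℂ (transferProduct z (fun k => (v k : ℂ)) N) := by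
  simp only [mem_spectrum_iff_exists_mulVec_eq_smul]
  exact ⟨fun ⟨_, hψ0, hψ⟩ => exists_transferProduct_eigenvector_of_hatanoNelson g v hN hψ0 hψ,
    fun ⟨_, hw0, hw⟩ => exists_hatanoNelson_eigenvector_of_transferProduct g v hN hw0 hw⟩

end HatanoNelson

/-- `z` is an eigenvalue of `H_N(g)` if and only if `e^{Ng}` is an eigenvalue of the
transfer matrix product `Φ_N(z) = T_N(z)⋯T_1(z)`. -/
theorem stmt17 (N : ℕ) (hN : 3 ≤ N) (g : ℝ) (v : Fin N → ℝ) (z : ℂ) :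
    z ∈ spectrum ℂ (hatanoNelson N g v) ↔
      (Real.exp (N * g) : ℂ) ∈ spectrum ℂ
        ((List.ofFn fun j : Fin N =>
          (!![z - (v j : ℂ), -1; 1, 0] : Matrix (Fin 2) (Fin 2) ℂ)).reverse.prod) := by
  have : NeZero N := ⟨by omega⟩
  have hΦ : (List.ofFn fun j : Fin N => !![z - (v j : ℂ), -1; 1, 0]).reverse.prod =
      transferProduct z (fun k => (v k : ℂ)) N := by
    simp [transferProduct, transferMatrix]
  have hμ : ((Real.exp (N * g) : ℂ))⁻¹ = (Real.exp (-g) : ℂ) ^ N := by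
    rw [← Complex.ofReal_inv, ← Real.exp_neg, ← Complex.ofReal_pow, ← Real.exp_nat_mul,
      neg_mul_eq_mul_neg]
  rw [hΦ, ← inv_mem_spectrum_iff_of_det_eq_one (det_transferProduct _ _ _)
    (Complex.ofReal_ne_zero.mpr (Real.exp_ne_zero _)), hμ]
  exact mem_spectrum_hatanoNelson_iff g v hN z
end
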